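/- Let n ≥ 3 be an integer and c a nonzero complex number. If G is a meromorphic function on ℂ, not identically zero, satisfying c·G(z)^n = ((G'/G)'(z))^{2n−1} as meromorphic functions, then G has neither zeros nor poles in ℂ. -/

import Mathlib

open MeasureTheory Filter

noncomputable section

/-- The positive part `log⁺` of the logarithm. -/
def logPlus (x : ℝ) : ℝ := max (Real.log x) 0

/-- The Nevanlinna proximity function `m(r,f)`. -/
def nevProx (f : ℂ → ℂ) (r : ℝ) : ℝ :=
  (2 * Real.pi)⁻¹ *
    ∫ θ in (0:ℝ)..(2 * Real.pi), logPlus ‖f ((r : ℂ) * Complex.exp ((θ : ℂ) * Complex.I))‖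

open scoped Classical in
/-- The order of the pole of `f` at `z` (zero if `f` is not meromorphic at `z` or
has no pole there). -/
def poleOrder (f : ℂ → ℂ) (z : ℂ) : ℕ :=
  if h : MeromorphicAt f z then (-((meromorphicOrderAt f z).untopD 0)).toNat else 0

/-- The unintegrated pole-counting function `n(t,f)` (poles counted with multiplicity). -/
def poleCount (f : ℂ → ℂ) (t : ℝ) : ℝ :=
  (∑' z : ℂ, if ‖z‖ ≤ t then (poleOrder f z : ENNReal) else 0).toReal

/-- The integrated Nevanlinna counting function `N(r,f)`. -/
def nevCount (f : ℂ → ℂ) (r : ℝ) : ℝ :=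
  poleCount f 0 * Real.log r + ∫ t in (0:ℝ)..r, (poleCount f t - poleCount f 0) / t

/-- The Nevanlinna characteristic function `T(r,f) = m(r,f) + N(r,f)`. -/
def nevChar (f : ℂ → ℂ) (r : ℝ) : ℝ := nevProx f r + nevCount f r

/-- A set `E ⊆ ℝ` has finite logarithmic measure: `∫_{E ∩ [1,∞)} dt/t < ∞`. -/
def FiniteLogMeasure (E : Set ℝ) : Prop :=
  (∫⁻ t in E ∩ Set.Ici 1, ENNReal.ofReal (1 / t)) < ⊤

/-- `S = o(T)` as `r → ∞` outside a possible exceptional set of finite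
logarithmic measure; this is the meaning of `S(r) = S(r,f)` when `T = T(r,f)`. -/
def SmallO (S T : ℝ → ℝ) : Prop :=
  ∃ E : Set ℝ, FiniteLogMeasure E ∧
    ∀ ε : ℝ, 0 < ε → ∃ R : ℝ, ∀ r : ℝ, R ≤ r → r ∉ E → |S r| ≤ ε * |T r|

/-- `g` is a small (meromorphic) function of `f`, i.e. `T(r,g) = S(r,f)`. -/
def SmallFunc (g f : ℂ → ℂ) : Prop :=
  MeromorphicOn g Set.univ ∧ SmallO (nevChar g) (nevChar f)

/-- The hyper-order `ρ₂(f) = limsup log⁺ log⁺ T(r,f) / log r`. -/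
def hyperOrder (f : ℂ → ℂ) : EReal :=
  Filter.limsup (fun r : ℝ => ((logPlus (logPlus (nevChar f r)) / Real.log r : ℝ) : EReal))
    Filter.atTop

/-- The order `ρ(f) = limsup log⁺ T(r,f) / log r`. -/
def growthOrder (f : ℂ → ℂ) : EReal :=
  Filter.limsup (fun r : ℝ => ((logPlus (nevChar f r) / Real.log r : ℝ) : EReal)) Filter.atTop

/-- A locally finite subset of `ℂ` (finite in every compact set). -/
def LocFinite (S : Set ℂ) : Prop := ∀ K : Set ℂ, IsCompact K → (S ∩ K).Finite

/-- Equality of meromorphic functions: `F` and `G` agree off a locally finite set. -/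
def MeroEq (F G : ℂ → ℂ) : Prop :=
  ∃ S : Set ℂ, LocFinite S ∧ ∀ z ∉ S, F z = G z

/-- A meromorphic function is transcendental if it is not a rational function. -/
def TranscendentalMero (f : ℂ → ℂ) : Prop :=
  ¬ ∃ p q : Polynomial ℂ, q ≠ 0 ∧ MeroEq f (fun z => p.eval z / q.eval z)

/-- One monomial of a differential-difference polynomial: a coefficient together with a
list of factors `(ν, c, k)`, a factor representing `(f^{(ν)}(z+c))^k`. -/
structure DDTerm where
  coeff : ℂ → ℂ
  factors : List (ℕ × ℂ × ℕ)

/-- The total degree of a monomial: the sum of the exponents of its factors. -/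
def DDTerm.degree (t : DDTerm) : ℕ := (t.factors.map fun p => p.2.2).sum

/-- Evaluation of a monomial on `f` at `z`. -/
def DDTerm.eval (t : DDTerm) (f : ℂ → ℂ) (z : ℂ) : ℂ :=
  t.coeff z * (t.factors.map fun p => (iteratedDeriv p.1 f (z + p.2.1)) ^ p.2.2).prod

/-- A differential-difference polynomial: a finite (formal) sum of monomials. -/
structure DDPoly where
  terms : List DDTerm

/-- The degree of a differential-difference polynomial: the maximal total degree
of its monomials. -/
def DDPoly.degree (P : DDPoly) : ℕ := (P.terms.map DDTerm.degree).foldr max 0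

/-- Evaluation of a differential-difference polynomial on `f` at `z`. -/
def DDPoly.eval (P : DDPoly) (f : ℂ → ℂ) (z : ℂ) : ℂ :=
  (P.terms.map fun t => t.eval f z).sum

/-- A difference polynomial is a differential-difference polynomial involving
no derivatives. -/
def DDPoly.IsDifference (P : DDPoly) : Prop :=
  ∀ t ∈ P.terms, ∀ p ∈ t.factors, p.1 = 0


/-! At a zero or pole of `G` of order `m ≠ 0` the logarithmic derivative has a simple pole, so
`(G'/G)'` has a double pole and the right-hand side has order `-2(2n - 1)`, while `c G^n` has
order `nm`. Then `n(m + 4) = 2`, which is impossible for `n ≥ 3`. The order of `G` is never `⊤`,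
since by the identity theorem `G` would then vanish off a discrete set. -/

open Filter Topology

theorem eventuallyEq_codiscrete_iff_forall_eventuallyEq_nhdsNE {X Y : Type*}
    [TopologicalSpace X] {f g : X → Y} :
    f =ᶠ[codiscrete X] g ↔ ∀ x, f =ᶠ[𝓝[≠] x] g := by
  simp [EventuallyEq, Filter.Eventually, codiscrete, mem_codiscreteWithin_iff_forall_mem_nhdsNE]

theorem locFinite_iff_compl_mem_codiscrete {S : Set ℂ} :
    LocFinite S ↔ Sᶜ ∈ codiscrete ℂ := by
  refine ⟨fun hS => ?_, fun hS K hK => ?_⟩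
  · refine codiscreteWithin_iff_locallyFiniteComplementWithin.2 fun z _ =>
      ⟨Metric.closedBall z 1, Metric.closedBall_mem_nhds z one_pos, ?_⟩
    simpa [Set.inter_comm] using hS _ (isCompact_closedBall z 1)
  · simpa [Set.inter_comm, Set.sdiff_eq] using
      hK.finite_sdiff_of_mem_codiscreteWithin (codiscreteWithin_mono (Set.subset_univ K) hS)

theorem meroEq_iff_eventuallyEq_codiscrete {F G : ℂ → ℂ} :
    MeroEq F G ↔ F =ᶠ[codiscrete ℂ] G := by
  refine ⟨fun ⟨S, hS, hFG⟩ => ?_, fun h => ⟨{z | F z ≠ G z}, ?_, fun z hz => not_not.1 hz⟩⟩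
  · filter_upwards [locFinite_iff_compl_mem_codiscrete.1 hS] with z hz using hFG z hz
  · exact locFinite_iff_compl_mem_codiscrete.2 (h.mono fun z hz => not_not.2 hz)

theorem Meromorphic.eventuallyEq_zero_codiscrete_of_meromorphicOrderAt_eq_top
    {𝕜 E : Type*} [RCLike 𝕜] [NormedAddCommGroup E] [NormedSpace 𝕜 E] {f : 𝕜 → E} {x : 𝕜}
    (hf : Meromorphic f) (h : meromorphicOrderAt f x = ⊤) : f =ᶠ[codiscrete 𝕜] 0 := by
  have htop (y : 𝕜) : meromorphicOrderAt f y = ⊤ := by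
    by_contra hy
    exact hf.exists_meromorphicOrderAt_ne_top_iff_forall.1 ⟨y, hy⟩ x h
  exact eventuallyEq_codiscrete_iff_forall_eventuallyEq_nhdsNE.2 fun y =>
    meromorphicOrderAt_eq_top_iff.1 (htop y)

theorem meromorphicOrderAt_deriv_logDeriv {𝕜 : Type*} [NontriviallyNormedField 𝕜]
    [CompleteSpace 𝕜] [CharZero 𝕜] {f : 𝕜 → 𝕜} {x : 𝕜} (hf : MeromorphicAt f x)
    (h₁ : meromorphicOrderAt f x ≠ 0) (h₂ : meromorphicOrderAt f x ≠ ⊤) :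
    meromorphicOrderAt (deriv (logDeriv f)) x = -2 :=
  meromorphicOrderAt_deriv_eq_sub_one (n := -1) (by norm_num)
    (meromorphicOrderAt_logDeriv_eq_neg_one hf h₁ h₂)

/-- the zero/pole analysis of `G` in Subcase 2.1 of Theorem 1.1. -/
theorem no_zeros_or_poles_of_logderiv_power_equation
    (n : ℕ) (hn : 3 ≤ n) (c : ℂ) (hc : c ≠ 0)
    (G : ℂ → ℂ) (hG : MeromorphicOn G Set.univ)
    (hGne : ¬ MeroEq G (fun _ => 0))
    (heq : MeroEq (fun z => c * G z ^ n)
      (fun z => (deriv (fun w => deriv G w / G w) z) ^ (2 * n - 1))) :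
    ∀ z : ℂ, meromorphicOrderAt G z = 0 := by
  change MeroEq _ (fun z => deriv (logDeriv G) z ^ (2 * n - 1)) at heq
  intro z₀
  by_contra h₀
  have hG₀ : MeromorphicAt G z₀ := hG z₀ (Set.mem_univ z₀)
  have htop : meromorphicOrderAt G z₀ ≠ ⊤ := fun htop => hGne <|
    meroEq_iff_eventuallyEq_codiscrete.2 <|
      (meromorphicOn_univ.1 hG).eventuallyEq_zero_codiscrete_of_meromorphicOrderAt_eq_top htop
  obtain ⟨m, hm⟩ := WithTop.ne_top_iff_exists.1 htop
  have hlhs : meromorphicOrderAt (fun z => c * G z ^ n) z₀ = (n * m : ℤ) := by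
    change meromorphicOrderAt ((fun _ => c) * fun z => G z ^ n) z₀ = _
    rw [meromorphicOrderAt_mul_of_ne_zero analyticAt_const hc, fun_meromorphicOrderAt_pow hG₀, ← hm]
    norm_cast
  have hpole := meromorphicOrderAt_deriv_logDeriv hG₀ h₀ htop
  have hrhs : meromorphicOrderAt (fun z => deriv (logDeriv G) z ^ (2 * n - 1)) z₀ =
      ((2 * n - 1 : ℕ) * (-2) : ℤ) := by
    rw [fun_meromorphicOrderAt_pow (meromorphicAt_of_meromorphicOrderAt_ne_zero (by simp [hpole])),
      hpole]
    norm_cast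
  have horder : (n * m : ℤ) = ((2 * n - 1 : ℕ) : ℤ) * (-2) := by
    rw [← WithTop.coe_inj, ← hlhs, ← hrhs]
    exact meromorphicOrderAt_congr
      (eventuallyEq_codiscrete_iff_forall_eventuallyEq_nhdsNE.1
        (meroEq_iff_eventuallyEq_codiscrete.1 heq) z₀)
  have hdvd : (n : ℤ) ∣ 2 := ⟨m + 4, by push_cast [show 1 ≤ 2 * n by omega] at horder; linarith⟩
  exact absurd (Int.le_of_dvd two_pos hdvd) (by omega)

end
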